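/- arXiv:1906.05901 — 6 statements merged into one kernel-verified Lean document; each statement's English description precedes it below -/
import Mathlib

section
/- If n is a natural number with n ≡ 0 (mod 4) and n ≥ 4, then the automorphism group of Z_n × Z_2 has order 4·φ(n), where φ is the Euler totient function. -/
/-!
An endomorphism of `ZMod n × ZMod 2` is determined by the images of `(1, 0)` and `(0, 1)`; the
second one has order dividing `2`, so its first coordinate is `0` or `n / 2`. Hence every
endomorphism has the matrix form `(x, y) ↦ (a x + b (n / 2) y, c π(x) + d y)` with `π` the
reduction mod `2`. When `4 ∣ n`, `π` kills `n / 2` and `(n / 2)² = 0`, so such a map is bijective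
exactly when `a` is a unit and `d = 1`: `φ(n)` choices for `a` and two each for `b` and `c`.
-/

namespace ZMod

variable {n : ℕ}

theorem eq_zero_or_eq_one (t : ZMod 2) : t = 0 ∨ t = 1 := by
  decide +revert

theorem eq_zero_or_eq_half_of_add_self_eq_zero [NeZero n] {x : ZMod n} (hx : x + x = 0) :
    x = 0 ∨ x = ((n / 2 : ℕ) : ZMod n) := by
  obtain ⟨k, hk⟩ : n ∣ x.val + x.val := by
    rwa [← natCast_eq_zero_iff, Nat.cast_add, natCast_zmod_val]
  have hlt := x.val_lt
  have hk2 : k < 2 := by nlinarith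
  rw [← natCast_zmod_val x]
  interval_cases k
  · exact Or.inl (by rw [show x.val = 0 by omega, Nat.cast_zero])
  · exact Or.inr (by congr 1; omega)

theorem addMonoidHom_prod_ext {m : ℕ} [NeZero n] [NeZero m] {M : Type*} [AddMonoid M]
    {F G : ZMod n × ZMod m →+ M} (h₁ : F (1, 0) = G (1, 0)) (h₂ : F (0, 1) = G (0, 1)) :
    F = G := by
  ext ⟨x, y⟩
  have hxy : (x, y) = x.val • ((1, 0) : ZMod n × ZMod m) + y.val • (0, 1) := by
    ext <;> simp
  rw [hxy, map_add, map_add, map_nsmul, map_nsmul, map_nsmul, map_nsmul, h₁, h₂]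

end ZMod

section

variable {n : ℕ}

def halfHom (h : 2 ∣ n) : ZMod 2 →+ ZMod n :=
  ZMod.lift 2 ⟨zmultiplesHom _ ((n / 2 : ℕ) : ZMod n), by
    rw [zmultiplesHom_apply, Nat.cast_ofNat, two_zsmul, ← Nat.cast_add,
      show n / 2 + n / 2 = n by omega, ZMod.natCast_self]⟩

theorem halfHom_one (h : 2 ∣ n) : halfHom h 1 = ((n / 2 : ℕ) : ZMod n) := by
  rw [← Int.cast_one, halfHom, ZMod.lift_coe, zmultiplesHom_apply, one_zsmul]

theorem halfHom_injective [NeZero n] (h : 2 ∣ n) : Function.Injective (halfHom h) := by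
  rw [injective_iff_map_eq_zero]
  intro t ht
  rcases ZMod.eq_zero_or_eq_one t with rfl | rfl
  · rfl
  · have hn := NeZero.ne n
    rw [halfHom_one, ZMod.natCast_eq_zero_iff] at ht
    have := Nat.le_of_dvd (by omega) ht
    omega

theorem exists_halfHom_eq_of_add_self_eq_zero [NeZero n] (h : 2 ∣ n) {x : ZMod n}
    (hx : x + x = 0) : ∃ t, halfHom h t = x := by
  rcases ZMod.eq_zero_or_eq_half_of_add_self_eq_zero hx with rfl | rfl
  exacts [⟨0, map_zero _⟩, ⟨1, halfHom_one h⟩]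

theorem castHom_halfHom (h4 : 4 ∣ n) {h : 2 ∣ n} (t : ZMod 2) :
    ZMod.castHom h (ZMod 2) (halfHom h t) = 0 := by
  rcases ZMod.eq_zero_or_eq_one t with rfl | rfl
  · simp
  · rw [halfHom_one, map_natCast, ZMod.natCast_eq_zero_iff]
    omega

theorem isNilpotent_halfHom (h4 : 4 ∣ n) {h : 2 ∣ n} (t : ZMod 2) :
    IsNilpotent (halfHom h t) := by
  refine ⟨2, ?_⟩
  rcases ZMod.eq_zero_or_eq_one t with rfl | rfl
  · simp
  · rw [halfHom_one, ← Nat.cast_pow, ZMod.natCast_eq_zero_iff]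
    obtain ⟨k, rfl⟩ := h4
    exact ⟨k, by rw [show 4 * k / 2 = 2 * k by omega]; ring⟩

theorem castHom_unit_mul_add_halfHom (h4 : 4 ∣ n) {h : 2 ∣ n} {a : ZMod n} (ha : IsUnit a)
    (x : ZMod n) (t : ZMod 2) :
    ZMod.castHom h (ZMod 2) (a * x + halfHom h t) = ZMod.castHom h (ZMod 2) x := by
  rw [map_add, map_mul, (ha.map _).eq_one, castHom_halfHom h4, one_mul, add_zero]

def prodTwoEndo (h : 2 ∣ n) (a : ZMod n) (b c d : ZMod 2) :
    ZMod n × ZMod 2 →+ ZMod n × ZMod 2 where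
  toFun p := (a * p.1 + halfHom h (b * p.2), c * ZMod.castHom h (ZMod 2) p.1 + d * p.2)
  map_zero' := by simp
  map_add' p q := by
    ext
    · simp only [Prod.fst_add, Prod.snd_add, mul_add, map_add]
      abel
    · simp only [Prod.fst_add, Prod.snd_add, mul_add, map_add]
      abel

@[simp]
theorem prodTwoEndo_apply (h : 2 ∣ n) (a : ZMod n) (b c d : ZMod 2) (p : ZMod n × ZMod 2) :
    prodTwoEndo h a b c d p =
      (a * p.1 + halfHom h (b * p.2), c * ZMod.castHom h (ZMod 2) p.1 + d * p.2) :=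
  rfl

theorem prodTwoEndo_inj [NeZero n] {h : 2 ∣ n} {a a' : ZMod n} {b b' c c' d d' : ZMod 2} :
    prodTwoEndo h a b c d = prodTwoEndo h a' b' c' d' ↔ a = a' ∧ b = b' ∧ c = c' ∧ d = d' := by
  refine ⟨fun he => ?_, by rintro ⟨rfl, rfl, rfl, rfl⟩; rfl⟩
  have h₁ := DFunLike.congr_fun he (1, 0)
  have h₂ := DFunLike.congr_fun he (0, 1)
  simp only [prodTwoEndo_apply, mul_one, mul_zero, map_one, map_zero, add_zero, zero_add,
    Prod.mk.injEq] at h₁ h₂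
  exact ⟨h₁.1, halfHom_injective h h₂.1, h₁.2, h₂.2⟩

theorem exists_eq_prodTwoEndo [NeZero n] (h : 2 ∣ n) (F : ZMod n × ZMod 2 →+ ZMod n × ZMod 2) :
    ∃ a b c d, F = prodTwoEndo h a b c d := by
  obtain ⟨b, hb⟩ : ∃ b, halfHom h b = (F (0, 1)).1 := by
    refine exists_halfHom_eq_of_add_self_eq_zero h ?_
    have h11 : ((0, 1) + (0, 1) : ZMod n × ZMod 2) = 0 := Prod.ext (add_zero 0) rfl
    rw [← Prod.fst_add, ← map_add, h11, map_zero, Prod.fst_zero]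
  refine ⟨(F (1, 0)).1, b, (F (1, 0)).2, (F (0, 1)).2, ZMod.addMonoidHom_prod_ext ?_ ?_⟩
  · ext <;> simp [-ZMod.castHom_apply]
  · ext <;> simp [hb]

theorem prodTwoEndo_bijective_iff [NeZero n] (h4 : 4 ∣ n) {h : 2 ∣ n} {a : ZMod n}
    {b c d : ZMod 2} : Function.Bijective (prodTwoEndo h a b c d) ↔ IsUnit a ∧ d = 1 := by
  refine ⟨fun hF => ?_, ?_⟩
  · obtain ⟨p, hp⟩ := hF.2 (1, 0)
    obtain ⟨q, hq⟩ := hF.2 (0, 1)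
    simp only [prodTwoEndo_apply, Prod.mk.injEq] at hp hq
    have ha : IsUnit a := by
      have hap : a * p.1 = 1 - halfHom h (b * p.2) := eq_sub_of_add_eq hp.1
      exact isUnit_of_mul_isUnit_left (hap ▸ (isNilpotent_halfHom h4 _).isUnit_one_sub)
    have hq₁ := congr_arg (ZMod.castHom h (ZMod 2)) hq.1
    rw [castHom_unit_mul_add_halfHom h4 ha, map_zero] at hq₁
    rw [hq₁, mul_zero, zero_add] at hq
    exact ⟨ha, (IsUnit.of_mul_eq_one _ hq.2).eq_one⟩
  · rintro ⟨ha, rfl⟩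
    refine Finite.injective_iff_bijective.mp ((injective_iff_map_eq_zero _).mpr ?_)
    rintro ⟨x, y⟩ hxy
    obtain ⟨hx₁, hy⟩ : a * x + halfHom h (b * y) = 0 ∧ c * ZMod.castHom h (ZMod 2) x + y = 0 := by
      simpa only [prodTwoEndo_apply, one_mul, Prod.mk_eq_zero] using hxy
    have hx := congr_arg (ZMod.castHom h (ZMod 2)) hx₁
    rw [castHom_unit_mul_add_halfHom h4 ha, map_zero] at hx
    obtain rfl : y = 0 := by rwa [hx, mul_zero, zero_add] at hy
    rw [mul_zero, map_zero, add_zero, ha.mul_right_eq_zero] at hx₁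
    rw [hx₁, Prod.mk_zero_zero]

noncomputable def prodTwoAut [NeZero n] (h4 : 4 ∣ n) (a : (ZMod n)ˣ) (b c : ZMod 2) :
    AddAut (ZMod n × ZMod 2) :=
  AddEquiv.ofBijective (prodTwoEndo (dvd_trans (by norm_num) h4) a b c 1)
    ((prodTwoEndo_bijective_iff h4).2 ⟨a.isUnit, rfl⟩)

theorem prodTwoAut_bijective [NeZero n] (h4 : 4 ∣ n) :
    Function.Bijective fun p : (ZMod n)ˣ × ZMod 2 × ZMod 2 ↦ prodTwoAut h4 p.1 p.2.1 p.2.2 := by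
  refine ⟨fun ⟨a, b, c⟩ ⟨a', b', c'⟩ he ↦ ?_, fun F ↦ ?_⟩
  · have he' : prodTwoEndo _ (a : ZMod n) b c 1 = prodTwoEndo _ a' b' c' 1 :=
      AddMonoidHom.ext fun p ↦ DFunLike.congr_fun he p
    obtain ⟨ha, hb, hc, -⟩ := prodTwoEndo_inj.mp he'
    rw [Units.ext ha, hb, hc]
  · have h2 : 2 ∣ n := dvd_trans (by norm_num) h4
    obtain ⟨a, b, c, d, hF⟩ := exists_eq_prodTwoEndo h2 F
    have hbij : Function.Bijective (prodTwoEndo h2 a b c d) := by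
      rw [← hF]
      exact F.bijective
    obtain ⟨⟨u, rfl⟩, rfl⟩ := (prodTwoEndo_bijective_iff h4).1 hbij
    exact ⟨(u, b, c), AddEquiv.ext fun p ↦ (DFunLike.congr_fun hF p).symm⟩

theorem card_addAut_zmod_prod_zmod_two [NeZero n] (h4 : 4 ∣ n) :
    Nat.card (AddAut (ZMod n × ZMod 2)) = 4 * n.totient := by
  rw [← Nat.card_congr (Equiv.ofBijective _ (prodTwoAut_bijective h4)), Nat.card_prod,
    Nat.card_prod, Nat.card_eq_fintype_card, ZMod.card_units_eq_totient, Nat.card_zmod]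
  ring

end

theorem aut_order_of_zn_prod_z2_of_four_dvd (n : ℕ) (h4 : n % 4 = 0) (hn : 4 ≤ n) :
    Nat.card (MulAut (Multiplicative (ZMod n) × Multiplicative (ZMod 2))) =
      4 * Nat.totient n := by
  have : NeZero n := ⟨by omega⟩
  rw [← card_addAut_zmod_prod_zmod_two (Nat.dvd_of_mod_eq_zero h4)]
  exact Nat.card_congr
    ((MulAut.congr (MulEquiv.prodMultiplicative (ZMod n) (ZMod 2))).toEquiv.symm.trans
      AddEquiv.toMultiplicative.symm)
end

section
/- If n is a natural number with n ≡ 2 (mod 4) and n ≥ 2, then the automorphism group of Z_n × Z_2 has order 6·φ(n). -/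
private lemma hom_eq_one_of_coprime {G H : Type*} [Group G] [Group H] [Finite G] [Finite H]
    (h : (Nat.card G).Coprime (Nat.card H)) (f : G →* H) (g : G) : f g = 1 := by
  have h1 : orderOf (f g) ∣ Nat.card G := (orderOf_map_dvd f g).trans (orderOf_dvd_natCard g)
  have h2 : orderOf (f g) ∣ Nat.card H := orderOf_dvd_natCard _
  have : orderOf (f g) ∣ Nat.gcd (Nat.card G) (Nat.card H) := Nat.dvd_gcd h1 h2
  rw [h] at this
  exact orderOf_eq_one_iff.mp (Nat.dvd_one.mp this)

private noncomputable def mulAutProdEquiv (G H : Type*) [Group G] [Group H] [Finite G] [Finite H]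
    (hc : (Nat.card G).Coprime (Nat.card H)) :
    MulAut (G × H) ≃ MulAut G × MulAut H := by
  have snd_one : ∀ (φ : MulAut (G × H)) (g : G), (φ (g, 1)).2 = 1 := fun φ g =>
    hom_eq_one_of_coprime hc ((MonoidHom.snd G H).comp (φ.toMonoidHom.comp (MonoidHom.inl G H))) g
  have fst_one : ∀ (φ : MulAut (G × H)) (h : H), (φ (1, h)).1 = 1 := fun φ h =>
    hom_eq_one_of_coprime hc.symm ((MonoidHom.fst G H).comp (φ.toMonoidHom.comp (MonoidHom.inr G H))) h
  refine
  { toFun := fun φ =>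
      (⟨⟨fun g => (φ (g, 1)).1, fun g => (φ.symm (g, 1)).1, ?_, ?_⟩, ?_⟩,
       ⟨⟨fun h => (φ (1, h)).2, fun h => (φ.symm (1, h)).2, ?_, ?_⟩, ?_⟩)
    invFun := fun p => MulEquiv.prodCongr p.1 p.2
    left_inv := ?_
    right_inv := ?_ }
  · intro g
    have : ((φ (g, 1)).1, (1 : H)) = φ (g, 1) := by
      ext <;> simp [snd_one φ g]
    simp only [this]
    simp
  · intro g
    have : ((φ.symm (g, 1)).1, (1 : H)) = φ.symm (g, 1) := by
      ext <;> simp [snd_one φ.symm g]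
    simp only [this]
    simp
  · intro a b
    have : ((a * b : G), (1 : H)) = (a, (1:H)) * (b, 1) := by simp
    show _ = _ * _
    simp only [Equiv.coe_fn_mk]
    rw [this, map_mul]; rfl
  · intro h
    have : ((1 : G), (φ (1, h)).2) = φ (1, h) := by
      ext <;> simp [fst_one φ h]
    simp only [this]
    simp
  · intro h
    have : ((1 : G), (φ.symm (1, h)).2) = φ.symm (1, h) := by
      ext <;> simp [fst_one φ.symm h]
    simp only [this]
    simp
  · intro a b
    have : ((1 : G), (a * b : H)) = ((1:G), a) * (1, b) := by simp
    show _ = _ * _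
    simp only [Equiv.coe_fn_mk]
    rw [this, map_mul]; rfl
  · intro φ
    have hx : ∀ x : G × H, x = (x.1, 1) * (1, x.2) := by
      intro x; ext <;> simp
    ext x
    · show (φ (x.1, 1)).1 = (φ x).1
      conv_rhs => rw [hx x]
      rw [map_mul]
      simp [fst_one φ x.2]
    · show (φ (1, x.2)).2 = (φ x).2
      conv_rhs => rw [hx x]
      rw [map_mul]
      simp [snd_one φ x.1]
  · intro p
    ext x <;> simp [MulEquiv.prodCongr]

theorem aut_order_of_zn_prod_z2_of_two_mod_four (n : ℕ) (h2 : n % 4 = 2) (hn : 2 ≤ n) :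
    Nat.card (MulAut (Multiplicative (ZMod n) × Multiplicative (ZMod 2))) =
      6 * Nat.totient n := by
  obtain ⟨m, rfl, hmodd⟩ : ∃ m, n = 2 * m ∧ m % 2 = 1 := ⟨n / 2, by omega, by omega⟩
  haveI : NeZero m := ⟨by omega⟩
  haveI : NeZero (2 * m) := ⟨by omega⟩
  have cop : Nat.Coprime 2 m := by
    exact Nat.coprime_two_left.mpr (Nat.odd_iff.mpr hmodd)
  -- chinese remainder
  let e0 : ZMod (2 * m) ≃+ ZMod 2 × ZMod m := (ZMod.chineseRemainder cop).toAddEquiv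
  let e1 : Multiplicative (ZMod (2 * m)) ≃* Multiplicative (ZMod 2) × Multiplicative (ZMod m) :=
    (AddEquiv.toMultiplicative e0).trans (MulEquiv.prodMultiplicative _ _)
  let E : Multiplicative (ZMod (2 * m)) × Multiplicative (ZMod 2) ≃*
      Multiplicative (ZMod m) × (Multiplicative (ZMod 2) × Multiplicative (ZMod 2)) :=
    (e1.prodCongr (MulEquiv.refl _)).trans <|
      (MulEquiv.prodComm.prodCongr (MulEquiv.refl _)).trans MulEquiv.prodAssoc
  set G := Multiplicative (ZMod m)
  set K := Multiplicative (ZMod 2) × Multiplicative (ZMod 2)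
  have hcardG : Nat.card G = m := by
    simp [G, Nat.card_eq_fintype_card]
  have hcardK : Nat.card K = 4 := by
    simp [K, Nat.card_eq_fintype_card]
  have hcop : (Nat.card G).Coprime (Nat.card K) := by
    rw [hcardG, hcardK]
    have : Nat.Coprime m 2 := cop.symm
    simpa using Nat.Coprime.mul_right this this
  have key : Nat.card (MulAut (Multiplicative (ZMod (2 * m)) × Multiplicative (ZMod 2))) =
      Nat.card (MulAut G) * Nat.card (MulAut K) := by
    rw [Nat.card_congr (MulAut.congr E).toEquiv,
      Nat.card_congr (mulAutProdEquiv G K hcop), Nat.card_prod]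
  rw [key]
  have hG : Nat.card (MulAut G) = Nat.totient m := by
    rw [IsCyclic.card_mulAut, hcardG]
  have hK : Nat.card (MulAut K) = 6 := by
    rw [Nat.card_eq_fintype_card]; decide
  rw [hG, hK, Nat.totient_mul cop]
  simp [Nat.totient_two]
  ring
end

section
/- For groups K and H, the componentwise embedding Aut(K) × Aut(H) → Aut(K × H) is an isomorphism if and only if both K × {1} and {1} × H are characteristic subgroups of K × H. -/
theorem componentwise_embedding_bijective_iff_characteristic
    {K H : Type*} [Group K] [Group H]
    (f : MulAut K × MulAut H →* MulAut (K × H))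
    (hf : ∀ (ω : MulAut K) (δ : MulAut H) (k : K) (h : H),
      f (ω, δ) (k, h) = (ω k, δ h)) :
    Function.Bijective f ↔
      (((⊤ : Subgroup K).prod (⊥ : Subgroup H)).Characteristic ∧
        ((⊥ : Subgroup K).prod (⊤ : Subgroup H)).Characteristic) := by
  constructor
  · rintro ⟨-, hsurj⟩
    constructor
    · rw [Subgroup.characteristic_iff_map_le]
      intro φ x hx
      rw [Subgroup.mem_map] at hx
      obtain ⟨⟨k, h⟩, hmem, rfl⟩ := hx
      rw [Subgroup.mem_prod] at hmem
      obtain ⟨-, hb⟩ := hmem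
      rw [Subgroup.mem_bot] at hb
      subst hb
      obtain ⟨⟨ω, δ⟩, rfl⟩ := hsurj φ
      rw [Subgroup.mem_prod]
      refine ⟨trivial, ?_⟩
      have := hf ω δ k 1
      simp only [MulEquiv.coe_toMonoidHom] at *
      rw [this, Subgroup.mem_bot]
      simp
    · rw [Subgroup.characteristic_iff_map_le]
      intro φ x hx
      rw [Subgroup.mem_map] at hx
      obtain ⟨⟨k, h⟩, hmem, rfl⟩ := hx
      rw [Subgroup.mem_prod] at hmem
      obtain ⟨hb, -⟩ := hmem
      rw [Subgroup.mem_bot] at hb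
      subst hb
      obtain ⟨⟨ω, δ⟩, rfl⟩ := hsurj φ
      rw [Subgroup.mem_prod]
      refine ⟨?_, trivial⟩
      have := hf ω δ 1 h
      simp only [MulEquiv.coe_toMonoidHom] at *
      rw [this, Subgroup.mem_bot]
      simp
  · rintro ⟨h1, h2⟩
    constructor
    · rintro ⟨ω, δ⟩ ⟨ω', δ'⟩ hEq
      have hk : ∀ k : K, ω k = ω' k := fun k => by
        have := congrArg (fun e : MulAut (K × H) => (e (k, 1)).1) hEq
        simpa [hf] using this
      have hh : ∀ h : H, δ h = δ' h := fun h => by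
        have := congrArg (fun e : MulAut (K × H) => (e (1, h)).2) hEq
        simpa [hf] using this
      exact Prod.ext (MulEquiv.ext hk) (MulEquiv.ext hh)
    · intro φ
      have key1 : ∀ (ψ : MulAut (K × H)) (k : K), (ψ (k, 1)).2 = 1 := by
        intro ψ k
        have hle := Subgroup.characteristic_iff_map_le.mp h1 ψ
        have : ψ (k, 1) ∈ (⊤ : Subgroup K).prod (⊥ : Subgroup H) :=
          hle ⟨(k, 1), Subgroup.mem_prod.mpr ⟨trivial, Subgroup.mem_bot.mpr rfl⟩, rfl⟩
        exact Subgroup.mem_bot.mp (Subgroup.mem_prod.mp this).2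
      have key2 : ∀ (ψ : MulAut (K × H)) (h : H), (ψ (1, h)).1 = 1 := by
        intro ψ h
        have hle := Subgroup.characteristic_iff_map_le.mp h2 ψ
        have : ψ (1, h) ∈ (⊥ : Subgroup K).prod (⊤ : Subgroup H) :=
          hle ⟨(1, h), Subgroup.mem_prod.mpr ⟨Subgroup.mem_bot.mpr rfl, trivial⟩, rfl⟩
        exact Subgroup.mem_bot.mp (Subgroup.mem_prod.mp this).1
      have eq1 : ∀ k : K, φ (k, 1) = ((φ (k, 1)).1, 1) := fun k =>
        Prod.ext rfl (key1 φ k)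
      have eq1' : ∀ k : K, φ.symm (k, 1) = ((φ.symm (k, 1)).1, 1) := fun k =>
        Prod.ext rfl (key1 φ.symm k)
      have eq2 : ∀ h : H, φ (1, h) = (1, (φ (1, h)).2) := fun h =>
        Prod.ext (key2 φ h) rfl
      have eq2' : ∀ h : H, φ.symm (1, h) = (1, (φ.symm (1, h)).2) := fun h =>
        Prod.ext (key2 φ.symm h) rfl
      refine ⟨(⟨⟨fun k => (φ (k, 1)).1, fun k => (φ.symm (k, 1)).1, ?_, ?_⟩, ?_⟩,
              ⟨⟨fun h => (φ (1, h)).2, fun h => (φ.symm (1, h)).2, ?_, ?_⟩, ?_⟩), ?_⟩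
      · intro k
        have : (φ.symm ((φ (k, 1)).1, 1)) = φ.symm (φ (k, 1)) := by rw [← eq1 k]
        simpa using congrArg Prod.fst this
      · intro k
        have : (φ ((φ.symm (k, 1)).1, 1)) = φ (φ.symm (k, 1)) := by rw [← eq1' k]
        simpa using congrArg Prod.fst this
      · intro a b
        show (φ (a * b, 1)).1 = (φ (a, 1)).1 * (φ (b, 1)).1
        have : ((a * b : K), (1 : H)) = (a, 1) * (b, 1) := by simp
        rw [this, map_mul]
        rfl
      · intro h
        have : (φ.symm (1, (φ (1, h)).2)) = φ.symm (φ (1, h)) := by rw [← eq2 h]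
        simpa using congrArg Prod.snd this
      · intro h
        have : (φ (1, (φ.symm (1, h)).2)) = φ (φ.symm (1, h)) := by rw [← eq2' h]
        simpa using congrArg Prod.snd this
      · intro a b
        show (φ (1, a * b)).2 = (φ (1, a)).2 * (φ (1, b)).2
        have : ((1 : K), (a * b : H)) = (1, a) * (1, b) := by simp
        rw [this, map_mul]
        rfl
      · apply MulEquiv.ext
        rintro ⟨k, h⟩
        rw [hf]
        have : ((k, h) : K × H) = (k, 1) * (1, h) := by simp
        rw [this, map_mul, eq1 k, eq2 h]
        simp [Prod.mk_mul_mk]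
end

section
/- If K and H are finite groups with gcd(|K|, |H|) = 1, then Aut(K × H) is isomorphic to Aut(K) × Aut(H). -/
set_option linter.unusedSectionVars false

section Aux
variable {K H : Type*} [Group K] [Group H] [Finite K] [Finite H]

lemma aux_snd_eq_one (h : Nat.Coprime (Nat.card K) (Nat.card H))
    (φ : MulAut (K × H)) (k : K) : (φ (k, 1)).2 = 1 := by
  have h1 : orderOf (φ (k, 1)) ∣ Nat.card K := by
    rw [MulEquiv.orderOf_eq, Prod.orderOf_mk, orderOf_one, Nat.lcm_one_right]
    exact orderOf_dvd_natCard k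
  have h2 : orderOf (φ (k, 1)).2 ∣ Nat.card K :=
    dvd_trans (by rw [Prod.orderOf]; exact Nat.dvd_lcm_right _ _) h1
  have h3 : orderOf (φ (k, 1)).2 ∣ Nat.card H := orderOf_dvd_natCard _
  exact orderOf_eq_one_iff.mp (Nat.eq_one_of_dvd_coprimes h h2 h3)

lemma aux_fst_eq_one (h : Nat.Coprime (Nat.card K) (Nat.card H))
    (φ : MulAut (K × H)) (x : H) : (φ (1, x)).1 = 1 := by
  have h1 : orderOf (φ (1, x)) ∣ Nat.card H := by
    rw [MulEquiv.orderOf_eq, Prod.orderOf_mk, orderOf_one, Nat.lcm_one_left]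
    exact orderOf_dvd_natCard x
  have h2 : orderOf (φ (1, x)).1 ∣ Nat.card H :=
    dvd_trans (by rw [Prod.orderOf]; exact Nat.dvd_lcm_left _ _) h1
  have h3 : orderOf (φ (1, x)).1 ∣ Nat.card K := orderOf_dvd_natCard _
  exact orderOf_eq_one_iff.mp (Nat.eq_one_of_dvd_coprimes h h3 h2)

lemma aux_fix (h : Nat.Coprime (Nat.card K) (Nat.card H))
    (φ : MulAut (K × H)) (k : K) : φ (k, 1) = ((φ (k, 1)).1, 1) := by
  conv_lhs => rw [← Prod.mk.eta (p := φ (k, 1)), aux_snd_eq_one h φ k]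

lemma aux_fix' (h : Nat.Coprime (Nat.card K) (Nat.card H))
    (φ : MulAut (K × H)) (x : H) : φ (1, x) = (1, (φ (1, x)).2) := by
  conv_lhs => rw [← Prod.mk.eta (p := φ (1, x)), aux_fst_eq_one h φ x]

def mkK (h : Nat.Coprime (Nat.card K) (Nat.card H)) (φ : MulAut (K × H)) : MulAut K where
  toFun k := (φ (k, 1)).1
  invFun k := (φ.symm (k, 1)).1
  left_inv k := by
    show (φ.symm ((φ (k, 1)).1, 1)).1 = k
    rw [← aux_fix h φ k, MulEquiv.symm_apply_apply]
  right_inv k := by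
    show (φ ((φ.symm (k, 1)).1, 1)).1 = k
    rw [← aux_fix h φ.symm k, MulEquiv.apply_symm_apply]
  map_mul' a b := by
    show (φ (a * b, 1)).1 = (φ (a, 1)).1 * (φ (b, 1)).1
    rw [show ((a * b : K), (1 : H)) = (a, 1) * (b, 1) by simp, map_mul]; rfl

def mkH (h : Nat.Coprime (Nat.card K) (Nat.card H)) (φ : MulAut (K × H)) : MulAut H where
  toFun x := (φ (1, x)).2
  invFun x := (φ.symm (1, x)).2
  left_inv x := by
    show (φ.symm (1, (φ (1, x)).2)).2 = x
    rw [← aux_fix' h φ x, MulEquiv.symm_apply_apply]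
  right_inv x := by
    show (φ (1, (φ.symm (1, x)).2)).2 = x
    rw [← aux_fix' h φ.symm x, MulEquiv.apply_symm_apply]
  map_mul' a b := by
    show (φ (1, a * b)).2 = (φ (1, a)).2 * (φ (1, b)).2
    rw [show ((1 : K), (a * b : H)) = (1, a) * (1, b) by simp, map_mul]; rfl

end Aux

theorem aut_prod_of_coprime_orders {K H : Type*} [Group K] [Group H]
    [Finite K] [Finite H] (h : Nat.Coprime (Nat.card K) (Nat.card H)) :
    Nonempty (MulAut (K × H) ≃* MulAut K × MulAut H) := by
  refine ⟨{ toFun := fun φ => (mkK h φ, mkH h φ)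
            invFun := fun p => MulEquiv.prodCongr p.1 p.2
            left_inv := ?_, right_inv := ?_, map_mul' := ?_ }⟩
  · intro φ
    ext ⟨k, x⟩
    · show (φ (k, 1)).1 = (φ (k, x)).1
      rw [show ((k : K), (x : H)) = (k, 1) * (1, x) by simp, map_mul, Prod.fst_mul,
        aux_fst_eq_one h φ x, mul_one]
    · show (φ (1, x)).2 = (φ (k, x)).2
      rw [show ((k : K), (x : H)) = (k, 1) * (1, x) by simp, map_mul, Prod.snd_mul,
        aux_snd_eq_one h φ k, one_mul]
  · intro ⟨α, β⟩
    refine Prod.ext ?_ ?_ <;> ext x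
    · show (MulEquiv.prodCongr α β (x, 1)).1 = α x
      simp [MulEquiv.prodCongr]
    · show (MulEquiv.prodCongr α β (1, x)).2 = β x
      simp [MulEquiv.prodCongr]
  · intro φ ψ
    refine Prod.ext ?_ ?_ <;> ext x
    · show (φ (ψ (x, 1))).1 = (φ ((ψ (x, 1)).1, 1)).1
      rw [← aux_fix h ψ x]
    · show (φ (ψ (1, x))).2 = (φ (1, (ψ (1, x)).2)).2
      rw [← aux_fix' h ψ x]
end

section
/- If H ≅ Aut(K) and ψ, φ : H → Aut(K) are both isomorphisms, then K ⋊_ψ H ≅ K ⋊_φ H. -/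
theorem semidirect_iso_of_iso_actions {K H : Type*} [Group K] [Group H]
    (ψ φ : H →* MulAut K) (hψ : Function.Bijective ψ) (hφ : Function.Bijective φ) :
    Nonempty (K ⋊[ψ] H ≃* K ⋊[φ] H) := by
  let eψ : H ≃* MulAut K := MulEquiv.ofBijective ψ hψ
  let eφ : H ≃* MulAut K := MulEquiv.ofBijective φ hφ
  let e : H ≃* H := eψ.trans eφ.symm
  have he : ∀ h, φ (e h) = ψ h := fun h => eφ.apply_symm_apply (eψ h)
  refine ⟨{ toFun := fun x => ⟨x.left, e x.right⟩
            invFun := fun x => ⟨x.left, e.symm x.right⟩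
            left_inv := fun x => by simp
            right_inv := fun x => by simp
            map_mul' := fun x y => by
              ext <;> simp [SemidirectProduct.mul_left, SemidirectProduct.mul_right, he] }⟩
end

section
/- For n ≥ 1, the dihedral group D_n of order 2n is isomorphic to its own automorphism group if and only if φ(n) = 2 (equivalently n ∈ {3, 4, 6}). -/
/-!
Every automorphism of `D_n` is determined by the images `e (r 1) = r b` and `e (sr 0) = sr a`, and
for `n ≠ 2` these may be any `b ∈ (ZMod n)ˣ`, `a ∈ ZMod n`: the automorphisms are exactly those
induced by the affine maps `j ↦ b * j + a` of `ZMod n`, so `|Aut D_n| = n φ(n)`. Comparing with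
`|D_n| = 2n` forces `φ(n) = 2`. Conversely, if `φ(n) = 2` then `(ZMod n)ˣ = {±1}`, and `D_n`, acting
on `ZMod n` by the translations `j ↦ j + i` and the reflections `j ↦ -j - i`, embeds into, hence
onto, `Aut D_n`. For `n = 2` the group `D_2` is commutative while `Aut D_2 ≅ S_3` is not.
-/

namespace DihedralGroup

variable {n : ℕ}

def affineAut (a : ZMod n) (b : (ZMod n)ˣ) : MulAut (DihedralGroup n) where
  toFun
    | r j => r ((b : ZMod n) * j)
    | sr j => sr ((b : ZMod n) * j + a)
  invFun
    | r j => r (↑b⁻¹ * j)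
    | sr j => sr (↑b⁻¹ * (j - a))
  left_inv x := by
    rcases x with j | j <;> simp [← mul_assoc, ← Units.val_mul]
  right_inv x := by
    rcases x with j | j <;> simp [← mul_assoc, ← Units.val_mul, mul_sub]
  map_mul' x y := by
    rcases x with i | i <;> rcases y with j | j <;>
      simp only [r_mul_r, r_mul_sr, sr_mul_r, sr_mul_sr] <;> ring_nf

@[simp]
lemma affineAut_apply_r (a : ZMod n) (b : (ZMod n)ˣ) (j : ZMod n) :
    affineAut a b (r j) = r ((b : ZMod n) * j) := rfl

@[simp]
lemma affineAut_apply_sr (a : ZMod n) (b : (ZMod n)ˣ) (j : ZMod n) :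
    affineAut a b (sr j) = sr ((b : ZMod n) * j + a) := rfl

lemma affineAut_mul (a c : ZMod n) (b d : (ZMod n)ˣ) :
    affineAut a b * affineAut c d = affineAut ((b : ZMod n) * c + a) (b * d) := by
  ext x
  rcases x with j | j <;> simp [mul_add, add_assoc, mul_assoc]

lemma affineAut_inj {a a' : ZMod n} {b b' : (ZMod n)ˣ} :
    affineAut a b = affineAut a' b' ↔ a = a' ∧ b = b' := by
  refine ⟨fun h => ⟨?_, Units.ext ?_⟩, fun ⟨ha, hb⟩ => ha ▸ hb ▸ rfl⟩
  · simpa using DFunLike.congr_fun h (sr 0)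
  · simpa using DFunLike.congr_fun h (r 1)

lemma exists_map_r_eq_r_mul (hn : n ≠ 2) (e : MulAut (DihedralGroup n)) :
    ∃ b : ZMod n, ∀ j, e (r j) = r ((b : ZMod n) * j) := by
  obtain ⟨b, hb⟩ : ∃ b, e (r 1) = r b := by
    rcases h : e (r 1) with b | i
    · exact ⟨b, rfl⟩
    · have := MulEquiv.orderOf_eq e (r 1)
      rw [h, orderOf_sr, orderOf_r_one] at this
      exact absurd this.symm hn
  refine ⟨b, fun j => ?_⟩
  rw [← ZMod.intCast_zmod_cast j, ← r_one_zpow, map_zpow, hb, r_zpow]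

lemma exists_map_r_eq_r_unit_mul (hn : n ≠ 2) (e : MulAut (DihedralGroup n)) :
    ∃ b : (ZMod n)ˣ, ∀ j, e (r j) = r ((b : ZMod n) * j) := by
  obtain ⟨b, hb⟩ := exists_map_r_eq_r_mul hn e
  obtain ⟨c, hc⟩ := exists_map_r_eq_r_mul hn e.symm
  have hbc : b * c = 1 := by
    have := e.apply_symm_apply (r 1)
    rw [hc, hb, mul_one] at this
    exact r.inj this
  exact ⟨⟨b, c, hbc, mul_comm c b ▸ hbc⟩, hb⟩

lemma exists_eq_affineAut (hn : n ≠ 2) (e : MulAut (DihedralGroup n)) :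
    ∃ a b, e = affineAut a b := by
  obtain ⟨b, hb⟩ := exists_map_r_eq_r_unit_mul hn e
  obtain ⟨a, ha⟩ : ∃ a, e (sr 0) = sr a := by
    rcases h : e (sr 0) with c | a
    · -- `e` already maps the rotations onto the rotations
      have : e (sr 0) = e (r (↑b⁻¹ * c)) := by rw [h, hb, Units.mul_inv_cancel_left]
      exact absurd (e.injective this) (by simp)
    · exact ⟨a, rfl⟩
  refine ⟨a, b, MulEquiv.ext fun x => ?_⟩
  rcases x with j | j
  · exact hb j
  · have hsr : sr j = sr 0 * r j := by rw [sr_mul_r, zero_add]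
    rw [affineAut_apply_sr, hsr, map_mul, ha, hb, sr_mul_r, add_comm]

lemma nat_card_mulAut [NeZero n] (hn : n ≠ 2) :
    Nat.card (MulAut (DihedralGroup n)) = n * n.totient := by
  have hbij : Function.Bijective fun p : ZMod n × (ZMod n)ˣ => affineAut p.1 p.2 := by
    refine ⟨fun p q h => Prod.ext_iff.mpr (affineAut_inj.mp h), fun e => ?_⟩
    obtain ⟨a, b, rfl⟩ := exists_eq_affineAut hn e
    exact ⟨(a, b), rfl⟩
  rw [← Nat.card_congr (Equiv.ofBijective _ hbij), Nat.card_prod, Nat.card_zmod,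
    Nat.card_eq_fintype_card (α := (ZMod n)ˣ), ZMod.card_units_eq_totient]

def toAffineAut (n : ℕ) : DihedralGroup n →* MulAut (DihedralGroup n) :=
  MonoidHom.mk'
    (fun
      | r i => affineAut i 1
      | sr i => affineAut (-i) (-1))
    (by
      rintro (i | i) (j | j) <;>
        simp only [r_mul_r, r_mul_sr, sr_mul_r, sr_mul_sr, affineAut_mul] <;>
        simp [affineAut_inj] <;> ring)

lemma toAffineAut_injective (hn : 2 < n) : Function.Injective (toAffineAut n) := by
  have : Fact (2 < n) := ⟨hn⟩
  have h1 : (1 : (ZMod n)ˣ) ≠ -1 := fun h => ZMod.neg_one_ne_one (congrArg Units.val h).symm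
  rintro (i | i) (j | j) h <;> obtain ⟨ha, hb⟩ := affineAut_inj.mp h
  · rw [ha]
  · exact absurd hb h1
  · exact absurd hb.symm h1
  · rw [neg_injective ha]

def swapAut : MulAut (DihedralGroup 2) :=
  { Equiv.swap (r 1) (sr 0) with map_mul' := by decide }

lemma not_commute_swapAut : ¬ Commute swapAut (affineAut 1 1) := by
  intro h
  have := DFunLike.congr_fun h.eq (r 1)
  revert this
  decide

end DihedralGroup

open DihedralGroup in
theorem dihedral_iso_aut_iff_totient_eq_two (n : ℕ) (hn : 1 ≤ n) :
    Nonempty (DihedralGroup n ≃* MulAut (DihedralGroup n)) ↔ Nat.totient n = 2 := by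
  have : NeZero n := ⟨by omega⟩
  constructor
  · rintro ⟨e⟩
    obtain rfl | hn2 := eq_or_ne n 2
    · obtain ⟨x, hx⟩ := e.surjective swapAut
      obtain ⟨y, hy⟩ := e.surjective (affineAut 1 1)
      have hxy : Commute x y := (commutative_iff.mpr (Or.inr rfl)).is_comm.comm x y
      exact (not_commute_swapAut (hx ▸ hy ▸ hxy.map e)).elim
    · have hcard := Nat.card_congr e.toEquiv
      rw [nat_card, nat_card_mulAut hn2, mul_comm] at hcard
      exact (Nat.eq_of_mul_eq_mul_left (by omega) hcard).symm
  · intro htot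
    have hn2 : 2 < n := by
      have : ¬ (n = 1 ∨ n = 2) := by rw [← Nat.totient_eq_one_iff]; omega
      omega
    have hcard : Nat.card (MulAut (DihedralGroup n)) ≤ Nat.card (DihedralGroup n) := by
      rw [nat_card_mulAut hn2.ne', nat_card, htot, mul_comm]
    exact ⟨.ofBijective _ ((toAffineAut_injective hn2).bijective_of_nat_card_le hcard)⟩
end
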